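/- Let p > 3 be a prime and let A be an 𝔽_p-brace which is not right nilpotent whose multiplicative group (A,∘) is the group XV, with generators P, Q, R, S ∈ A satisfying the XV relations. If R ∈ A^2, then Q*Q = 0. -/
import Mathlib


/-- A left brace: `(A, +)` an abelian group, `(A, *)` a group (we write the brace
multiplication `∘` as `*`), with `a * (b + c) + a = a * b + a * c`. -/
class LeftBrace (A : Type*) extends Group A, AddCommGroup A where
  mul_add_eq : ∀ a b c : A, a * (b + c) + a = a * b + a * c

namespace LeftBrace

/-- The star operation `a * b = a∘b - a - b` of a left brace. -/
def star {A : Type*} [LeftBrace A] (a b : A) : A := a * b - a - b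

end LeftBrace

/-- An `𝔽ₚ`-brace: a left brace whose additive group is a `ZMod p`-vector space
with `a * (α • b) = α • (a * b)`. -/
class FpBrace (p : ℕ) (A : Type*) extends LeftBrace A, Module (ZMod p) A where
  star_smul' : ∀ (α : ZMod p) (a b : A),
    LeftBrace.star a (α • b) = α • LeftBrace.star a b

/-- The left chain `A^1 = A`, `A^{i+1} = A * A^i` (additive subgroup generated by
`a * b`, `a ∈ A`, `b ∈ A^i`). -/
def lpow (A : Type*) [LeftBrace A] : ℕ → AddSubgroup A
  | 0 => ⊤
  | 1 => ⊤
  | (n+2) => AddSubgroup.closure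
      {x : A | ∃ a : A, ∃ b ∈ lpow A (n+1), x = LeftBrace.star a b}

/-- The right chain `A^{(1)} = A`, `A^{(i+1)} = A^{(i)} * A`. -/
def rpow (A : Type*) [LeftBrace A] : ℕ → AddSubgroup A
  | 0 => ⊤
  | 1 => ⊤
  | (n+2) => AddSubgroup.closure
      {x : A | ∃ a ∈ rpow A (n+1), ∃ b : A, x = LeftBrace.star a b}

/-- A left brace is right nilpotent if `A^{(n)} = 0` for some `n`. -/
def IsRightNilpotent (A : Type*) [LeftBrace A] : Prop := ∃ n, rpow A n = ⊥

/-- The defining relations of the group XV on generators `P, Q, R, S`. -/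
def XVRelations {A : Type*} [LeftBrace A] (p : ℕ) (P Q R S : A) : Prop :=
  Q * S = S * Q * P ∧ Q * R = R * Q ∧ P * S = S * P ∧ P * Q = Q * P ∧
  P * R = R * P ∧ R * S = S * R * Q ∧
  P ^ p = 1 ∧ Q ^ p = 1 ∧ R ^ p = 1 ∧ S ^ p = 1

/-- The multiplicative group of the brace `A` is the group XV, with generators
`P, Q, R, S` satisfying the XV relations. -/
def IsXVBrace (p : ℕ) (A : Type*) [LeftBrace A] (P Q R S : A) : Prop :=
  Nat.card A = p ^ 4 ∧ Subgroup.closure {P, Q, R, S} = ⊤ ∧ XVRelations p P Q R S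


/-- The Multiplicative Table with parameters `y, i, k`. -/
def MultTable {p : ℕ} {A : Type*} [LeftBrace A] [Module (ZMod p) A]
    (P Q R S : A) (y i k : ZMod p) : Prop :=
  LeftBrace.star P P = 0 ∧ LeftBrace.star P Q = 0 ∧
  LeftBrace.star P R = y • S ∧ LeftBrace.star P S = 0 ∧
  LeftBrace.star Q P = 0 ∧ LeftBrace.star Q Q = -(y • S) ∧
  LeftBrace.star Q R = ((2 : ZMod p)⁻¹ * y) • S ∧ LeftBrace.star Q S = 0 ∧
  LeftBrace.star R P = y • S ∧ LeftBrace.star R Q = ((2 : ZMod p)⁻¹ * y) • S ∧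
  LeftBrace.star R R = i • P + k • S ∧ LeftBrace.star R S = 0 ∧
  LeftBrace.star S P = 0 ∧ LeftBrace.star S Q = -P ∧
  LeftBrace.star S R = -Q + P - ((2 : ZMod p)⁻¹ * y) • S ∧ LeftBrace.star S S = 0

/-- Additive subgroup generated by all `x * y`, `x ∈ X`, `y ∈ Y`. -/
def starSpan {A : Type*} [LeftBrace A] (X Y : AddSubgroup A) : AddSubgroup A :=
  AddSubgroup.closure {z : A | ∃ x ∈ X, ∃ y ∈ Y, z = LeftBrace.star x y}

/-- An ideal of a left brace: an additive subgroup closed under all `λ_a` and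
normal in `(A, ∘)`. -/
def IsBraceIdeal {A : Type*} [LeftBrace A] (I : AddSubgroup A) : Prop :=
  (∀ a : A, ∀ b ∈ I, a * b - a ∈ I) ∧ (∀ a : A, ∀ b ∈ I, a * b * a⁻¹ ∈ I)

/-- A brace is prime if the product of any two nonzero ideals is nonzero. -/
def IsPrimeBrace (A : Type*) [LeftBrace A] : Prop :=
  ∀ I J : AddSubgroup A, IsBraceIdeal I → IsBraceIdeal J → I ≠ ⊥ → J ≠ ⊥ →
    starSpan I J ≠ ⊥

/-- Left chain of a nonassociative algebra given by a bilinear map. -/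
def preLieL (R : Type*) [CommRing R] (V : Type*) [AddCommGroup V] [Module R V]
    (mul : V →ₗ[R] V →ₗ[R] V) : ℕ → Submodule R V
  | 0 => ⊤
  | 1 => ⊤
  | (n+2) => Submodule.span R
      {x : V | ∃ a : V, ∃ b ∈ preLieL R V mul (n+1), x = mul a b}

/-- Right chain of a nonassociative algebra given by a bilinear map. -/
def preLieR (R : Type*) [CommRing R] (V : Type*) [AddCommGroup V] [Module R V]
    (mul : V →ₗ[R] V →ₗ[R] V) : ℕ → Submodule R V
  | 0 => ⊤
  | 1 => ⊤
  | (n+2) => Submodule.span R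
      {x : V | ∃ a ∈ preLieR R V mul (n+1), ∃ b : V, x = mul a b}

/-- The defining relations of the group XIV on generators `P, Q, R, S`. -/
def XIVRelations {A : Type*} [LeftBrace A] (p : ℕ) (P Q R S : A) : Prop :=
  Q * P = P * Q ∧ Q * R = R * Q ∧ Q * S = S * Q ∧
  P * R = R * P ∧ P * S = S * P ∧ R * S = S * R * P ∧
  P ^ p = 1 ∧ Q ^ p = 1 ∧ R ^ p = 1 ∧ S ^ p = 1

-- ===== auxiliary lemmas =====
namespace St8

open LeftBrace AddSubgroup

variable {A : Type*} [LeftBrace A]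

lemma one_eq_zero : (1 : A) = 0 := by
  have h := LeftBrace.mul_add_eq (1 : A) 0 0
  simpa using h

lemma mul_add' (a b c : A) : a * (b + c) = a * b + a * c - a :=
  eq_sub_of_add_eq (LeftBrace.mul_add_eq a b c)

lemma mul_sub' (a b c : A) : a * (b - c) = a * b - a * c + a := by
  have h := mul_add' a (b - c) c
  rw [sub_add_cancel] at h
  rw [h]; abel

/-- `λ_a(x) = a∘x - a`. -/
def lam (a x : A) : A := a * x - a

lemma lam_add (a x y : A) : lam a (x + y) = lam a x + lam a y := by
  simp only [lam, mul_add']; abel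

lemma lam_sub (a x y : A) : lam a (x - y) = lam a x - lam a y := by
  simp only [lam, mul_sub']; abel

lemma lam_mul (a b x : A) : lam (a * b) x = lam a (lam b x) := by
  simp only [lam, mul_sub', mul_assoc]; abel

lemma lam_one (x : A) : lam 1 x = x := by
  simp [lam, one_eq_zero]

lemma star_def (a b : A) : star a b = lam a b - b := rfl

lemma lam_eq (a b : A) : lam a b = star a b + b := by rw [star_def]; abel

lemma star_add (a x y : A) : star a (x + y) = star a x + star a y := by
  simp only [star_def, lam_add]; abel

lemma star_sub (a x y : A) : star a (x - y) = star a x - star a y := by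
  simp only [star_def, lam_sub]; abel

/-- `lam a` as an additive hom. -/
def lamHom (a : A) : A →+ A := AddMonoidHom.mk' (lam a) (lam_add a)

lemma lam_zsmul (a : A) (k : ℤ) (x : A) : lam a (k • x) = k • lam a x :=
  map_zsmul (lamHom a) k x

lemma star_zsmul (a : A) (k : ℤ) (x : A) : star a (k • x) = k • star a x := by
  simp only [star_def, lam_zsmul, smul_sub]

lemma lpow_zero : lpow A 0 = ⊤ := rfl
lemma lpow_one : lpow A 1 = ⊤ := rfl

lemma lpow_add_two (n : ℕ) :
    lpow A (n+2) = AddSubgroup.closure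
      {x : A | ∃ a : A, ∃ b ∈ lpow A (n+1), x = LeftBrace.star a b} := rfl

lemma mem_lpow_one (b : A) : b ∈ lpow A 1 := by rw [lpow_one]; trivial

lemma star_mem_succ {i : ℕ} (a : A) {b : A} (hb : b ∈ lpow A i) :
    star a b ∈ lpow A (i + 1) := by
  match i with
  | 0 => exact mem_lpow_one _
  | (n+1) => exact AddSubgroup.subset_closure ⟨a, b, hb, rfl⟩

lemma star_mem_two (a b : A) : star a b ∈ lpow A 2 :=
  star_mem_succ a (mem_lpow_one b)

lemma lpow_succ_le : ∀ i : ℕ, lpow A (i + 1) ≤ lpow A i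
  | 0 => le_top
  | 1 => le_top
  | (n+2) => by
      rw [lpow_add_two (n+1)]
      refine (AddSubgroup.closure_le _).2 ?_
      rintro x ⟨a, b, hb, rfl⟩
      exact star_mem_succ a (lpow_succ_le (n+1) hb)

lemma lam_mem {i : ℕ} (a : A) {x : A} (hx : x ∈ lpow A i) : lam a x ∈ lpow A i := by
  rw [lam_eq]
  exact add_mem (lpow_succ_le i (star_mem_succ a hx)) hx

end St8

namespace St8

open LeftBrace AddSubgroup

-- cardinality helpers
lemma card_lt_of_lt {G : Type*} [AddGroup G] [Finite G] {W1 W2 : AddSubgroup G}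
    (h : W1 < W2) : Nat.card W1 < Nat.card W2 := by
  have h1 : Nat.card W1 = (W1 : Set G).ncard := Nat.card_coe_set_eq _
  have h2 : Nat.card W2 = (W2 : Set G).ncard := Nat.card_coe_set_eq _
  rw [h1, h2]
  exact Set.ncard_lt_ncard (SetLike.coe_ssubset_coe.2 h) (Set.toFinite _)

lemma card_le_of_le {G : Type*} [AddGroup G] [Finite G] {W1 W2 : AddSubgroup G}
    (h : W1 ≤ W2) : Nat.card W1 ≤ Nat.card W2 := by
  have h1 : Nat.card W1 = (W1 : Set G).ncard := Nat.card_coe_set_eq _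
  have h2 : Nat.card W2 = (W2 : Set G).ncard := Nat.card_coe_set_eq _
  rw [h1, h2]
  exact Set.ncard_le_ncard h (Set.toFinite _)

lemma eq_of_le_of_card_le {G : Type*} [AddGroup G] [Finite G] {W1 W2 : AddSubgroup G}
    (h : W1 ≤ W2) (hc : Nat.card W2 ≤ Nat.card W1) : W1 = W2 := by
  apply SetLike.coe_injective
  refine Set.eq_of_subset_of_ncard_le h ?_ (Set.toFinite _)
  rw [← Nat.card_coe_set_eq, ← Nat.card_coe_set_eq]
  exact hc

variable {p : ℕ} {B : Type*} [FpBrace p B]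

lemma star_smul (α : ZMod p) (a b : B) : star a (α • b) = α • star a b :=
  FpBrace.star_smul' α a b

lemma psmul_eq_zero (x : B) : p • x = 0 := by
  rw [← Nat.cast_smul_eq_nsmul (ZMod p), ZMod.natCast_self, zero_smul]

lemma card_ppow (hp : p.Prime) [Finite B] (W : AddSubgroup B) :
    ∃ k, Nat.card W = p ^ k := by
  haveI : Fact p.Prime := ⟨hp⟩
  haveI : Finite (Multiplicative W) := Finite.of_equiv _ Multiplicative.ofAdd
  have hW : IsPGroup p (Multiplicative (↥W)) := by
    intro g
    refine ⟨1, Multiplicative.toAdd.injective ?_⟩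
    have h0 : p • Multiplicative.toAdd g = (0 : ↥W) := by
      apply Subtype.ext
      show ((p • Multiplicative.toAdd g : ↥W) : B) = 0
      rw [show ((p • Multiplicative.toAdd g : ↥W) : B)
            = p • ((Multiplicative.toAdd g : ↥W) : B) from map_nsmul W.subtype p _]
      exact psmul_eq_zero _
    rw [toAdd_pow, pow_one, h0]
    rfl
  obtain ⟨k, hk⟩ := (IsPGroup.iff_card).1 hW
  exact ⟨k, by rwa [Nat.card_congr Multiplicative.toAdd] at hk⟩

/-- Nakayama-type lemma: a subgroup equal to the span of its star-translates is trivial. -/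
lemma nak (hp : p.Prime) (hcard : Nat.card B = p ^ 4) (W : AddSubgroup B)
    (hgen : AddSubgroup.closure {x : B | ∃ a : B, ∃ b ∈ W, x = star a b} = W) :
    W = ⊥ := by
  haveI : Fact p.Prime := ⟨hp⟩
  haveI : NeZero p := ⟨hp.pos.ne'⟩
  haveI : Finite B := Nat.finite_of_card_ne_zero
    (by rw [hcard]; exact pow_ne_zero 4 hp.pos.ne')
  by_contra hW
  rw [AddSubgroup.eq_bot_iff_forall] at hW
  push_neg at hW
  obtain ⟨w₀, hw₀W, hw₀⟩ := hW
  have hstar : ∀ a : B, ∀ x ∈ W, star a x ∈ W := fun a x hx =>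
    hgen ▸ AddSubgroup.subset_closure ⟨a, x, hx, rfl⟩
  have hstab : ∀ a : B, ∀ x ∈ W, lam a x ∈ W := fun a x hx => by
    rw [lam_eq]; exact add_mem (hstar a x hx) hx
  -- `W` as a `ZMod p`-submodule
  let W' : Submodule (ZMod p) B :=
    { carrier := W
      add_mem' := fun ha hb => W.add_mem ha hb
      zero_mem' := W.zero_mem
      smul_mem' := by
        intro c x hx
        obtain ⟨n, rfl⟩ := ZMod.natCast_zmod_surjective c
        rw [Nat.cast_smul_eq_nsmul]
        exact AddSubgroup.nsmul_mem W hx n }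
  -- λ as linear endomorphisms of W'
  have hstab' : ∀ (a : B) (x : W'), lam a (x : B) ∈ W' := fun a x => hstab a x x.2
  let e : B → (W' →ₗ[ZMod p] W') := fun a =>
    { toFun := fun x => ⟨lam a (x : B), hstab' a x⟩
      map_add' := fun x y => Subtype.ext (lam_add a x y)
      map_smul' := fun c x => Subtype.ext (by
        show lam a ((c • x : W') : B) = c • lam a (x : B)
        rw [Submodule.coe_smul, lam_eq, lam_eq, star_smul, smul_add]) }
  let D := Module.Dual (ZMod p) W'
  letI : SMul B D := ⟨fun g f => f.comp (e g⁻¹)⟩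
  have smul_def : ∀ (g : B) (f : D), g • f = f.comp (e g⁻¹) := fun _ _ => rfl
  letI : MulAction B D :=
    { one_smul := fun f => by
        rw [smul_def]
        ext x
        show f (e 1⁻¹ x) = f x
        congr 1
        exact Subtype.ext (by show lam (1 : B)⁻¹ (x : B) = (x : B); rw [inv_one, lam_one])
      mul_smul := fun g h f => by
        rw [smul_def, smul_def, smul_def]
        ext x
        show f (e (g * h)⁻¹ x) = f (e h⁻¹ (e g⁻¹ x))
        congr 1
        exact Subtype.ext (by
          show lam (g * h)⁻¹ (x : B) = lam h⁻¹ (lam g⁻¹ (x : B))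
          rw [mul_inv_rev, lam_mul]) }
  haveI : Finite D := Finite.of_injective (fun f => (f : W' → ZMod p)) DFunLike.coe_injective
  have hPG : IsPGroup p B := IsPGroup.of_card hcard
  have hmod := hPG.card_modEq_card_fixedPoints D
  -- card D is a power of p
  haveI : Finite (Multiplicative D) := Finite.of_equiv _ Multiplicative.ofAdd
  have hDp : IsPGroup p (Multiplicative D) := by
    intro f
    refine ⟨1, Multiplicative.toAdd.injective ?_⟩
    rw [toAdd_pow, pow_one]
    show p • Multiplicative.toAdd f = Multiplicative.toAdd (1 : Multiplicative D)
    rw [← Nat.cast_smul_eq_nsmul (ZMod p), ZMod.natCast_self, zero_smul]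
    rfl
  obtain ⟨k, hk⟩ := (IsPGroup.iff_card).1 hDp
  have hcardD : Nat.card D = p ^ k := by rwa [Nat.card_congr Multiplicative.toAdd] at hk
  -- a functional not vanishing at w₀
  have hvne : (⟨w₀, hw₀W⟩ : W') ≠ 0 := fun h => hw₀ (by simpa using congrArg Subtype.val h)
  have hφ : ¬ ∀ φ : Module.Dual (ZMod p) W', φ ⟨w₀, hw₀W⟩ = 0 := by
    rw [Module.forall_dual_apply_eq_zero_iff (ZMod p)]
    exact hvne
  push_neg at hφ
  obtain ⟨φ₀, hφ₀⟩ := hφ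
  have hk1 : k ≠ 0 := by
    rintro rfl
    rw [pow_zero] at hcardD
    haveI := (Nat.card_eq_one_iff_unique.mp hcardD).1
    exact hφ₀ (by rw [Subsingleton.elim φ₀ 0]; simp)
  -- fixed points
  have h1 : p ∣ Nat.card D := hcardD ▸ dvd_pow_self p hk1
  have hpdvd : p ∣ Nat.card (MulAction.fixedPoints B D) :=
    (Nat.modEq_zero_iff_dvd).1 ((hmod.symm.trans (Nat.modEq_zero_iff_dvd.2 h1)))
  have h0fix : (0 : D) ∈ MulAction.fixedPoints B D := fun g => by
    rw [smul_def]; exact LinearMap.zero_comp _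
  have hfixpos : 0 < Nat.card (MulAction.fixedPoints B D) :=
    Nat.card_pos_iff.2 ⟨⟨⟨0, h0fix⟩⟩, Set.toFinite _⟩
  have hfixbig : 1 < Nat.card (MulAction.fixedPoints B D) :=
    lt_of_lt_of_le hp.one_lt (Nat.le_of_dvd hfixpos hpdvd)
  obtain ⟨f, hffix, hfne0⟩ : ∃ f : D, f ∈ MulAction.fixedPoints B D ∧ f ≠ 0 := by
    by_contra hcon
    push_neg at hcon
    have : MulAction.fixedPoints B D = {0} := by
      apply Set.eq_singleton_iff_unique_mem.2
      exact ⟨h0fix, fun f hf => by by_contra h0; exact h0 (hcon f hf)⟩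
    rw [this] at hfixbig
    simp at hfixbig
  have hfix : ∀ g : B, g • f = f := hffix
  have hlamf : ∀ (a : B) (x : W'), f (e a x) = f x := by
    intro a x
    have h1 : (a⁻¹ • f) x = f x := by rw [hfix a⁻¹]
    rw [smul_def] at h1
    rw [inv_inv] at h1
    exact h1
  have hstar0 : ∀ (a : B) (x : B) (hx : x ∈ W), f ⟨star a x, hstar a x hx⟩ = 0 := by
    intro a x hx
    have h1 : (⟨star a x, hstar a x hx⟩ : W') = e a ⟨x, hx⟩ - ⟨x, hx⟩ :=
      Subtype.ext (by show star a x = lam a x - x; rw [star_def])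
    rw [h1, map_sub, hlamf a ⟨x, hx⟩, sub_self]
  -- f vanishes on all of W
  let K : AddSubgroup B :=
    { carrier := {x : B | ∃ hx : x ∈ W, f ⟨x, hx⟩ = 0}
      zero_mem' := ⟨W.zero_mem, by
        have h1 : (⟨0, W.zero_mem⟩ : W') = 0 := rfl
        rw [h1, map_zero]⟩
      add_mem' := by
        rintro x y ⟨hx, hfx⟩ ⟨hy, hfy⟩
        refine ⟨W.add_mem hx hy, ?_⟩
        have h1 : (⟨x + y, W.add_mem hx hy⟩ : W') = ⟨x, hx⟩ + ⟨y, hy⟩ := rfl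
        rw [h1, map_add, hfx, hfy, add_zero]
      neg_mem' := by
        rintro x ⟨hx, hfx⟩
        refine ⟨W.neg_mem hx, ?_⟩
        have h1 : (⟨-x, W.neg_mem hx⟩ : W') = -⟨x, hx⟩ := rfl
        rw [h1, map_neg, hfx, neg_zero] }
  have hWK : W ≤ K := by
    conv_lhs => rw [← hgen]
    refine (AddSubgroup.closure_le _).2 ?_
    rintro x ⟨a, b, hb, rfl⟩
    exact ⟨hstar a b hb, hstar0 a b hb⟩
  apply hfne0
  ext x
  obtain ⟨xv, hxv⟩ := x
  obtain ⟨hx', h0⟩ := hWK hxv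
  simpa using h0

end St8

-- ===== the main theorem =====

open LeftBrace St8 AddSubgroup in
theorem statement8' (p : ℕ) (hp : p.Prime) (hp3 : 3 < p) (A : Type*) [FpBrace p A]
    (P Q R S : A)
    (hcard : Nat.card A = p ^ 4)
    (hQRc : Q * R = R * Q) (hRSc : R * S = S * R * Q)
    (hR : R ∈ lpow A 2) :
    LeftBrace.star Q Q = 0 := by
  classical
  haveI : Fact p.Prime := ⟨hp⟩
  haveI : NeZero p := ⟨hp.pos.ne'⟩
  haveI hfin : Finite A := Nat.finite_of_card_ne_zero
    (by rw [hcard]; exact pow_ne_zero 4 hp.pos.ne')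
  -- group-theoretic identities
  have hQcomm : R⁻¹ * (S⁻¹ * (R * S)) = Q := by rw [hRSc]; group
  have hstarQR : star Q R = star R Q := by
    simp only [LeftBrace.star]; rw [hQRc]; abel
  -- Q ∈ A², and Q - R*S ∈ A³
  have hQeq : Q = star R S - star S R - star (S * R) Q := by
    simp only [LeftBrace.star]; rw [hRSc]; abel
  have hQ2 : Q ∈ lpow A 2 := by
    rw [hQeq]
    exact sub_mem (sub_mem (star_mem_two R S) (star_mem_two S R)) (star_mem_two (S * R) Q)
  have hz_eq : Q - star R S = -star S R - star (S * R) Q := by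
    simp only [LeftBrace.star]; rw [hRSc]; abel
  have hzmem : Q - star R S ∈ lpow A 3 := by
    rw [hz_eq]
    exact sub_mem (neg_mem (star_mem_succ S hR)) (star_mem_succ (S * R) hQ2)
  -- the commutator expansion of star Q
  have hstarComm : ∀ x : A,
      star Q x = lam R⁻¹ (lam S⁻¹ (star R (star S x) - star S (star R x))) := by
    intro x
    have e0 : lam Q x = lam R⁻¹ (lam S⁻¹ (lam R (lam S x))) := by
      rw [← hQcomm, lam_mul, lam_mul, lam_mul]
    have e2 : lam R (lam S x) = (star R (star S x) - star S (star R x)) + lam S (lam R x) := by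
      simp only [lam_eq, St8.star_add]; abel
    have e3 : lam S⁻¹ (lam S (lam R x)) = lam R x := by
      rw [← lam_mul, inv_mul_cancel, lam_one]
    have e4 : lam R⁻¹ (lam R x) = x := by
      rw [← lam_mul, inv_mul_cancel, lam_one]
    rw [star_def, e0, e2, lam_add, e3, lam_add, e4]
    abel
  have hshift : ∀ (i : ℕ) (x : A), x ∈ lpow A i → star Q x ∈ lpow A (i + 2) := by
    intro i x hx
    rw [hstarComm x]
    have h1 : star R (star S x) - star S (star R x) ∈ lpow A (i + 2) :=
      sub_mem (star_mem_succ R (star_mem_succ S hx)) (star_mem_succ S (star_mem_succ R hx))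
    exact lam_mem R⁻¹ (lam_mem S⁻¹ h1)
  -- strictness of the left chain
  have hstrict : ∀ n : ℕ, lpow A (n + 1) ≠ ⊥ → lpow A (n + 2) < lpow A (n + 1) := by
    intro n hne
    refine lt_of_le_of_ne (lpow_succ_le (n + 1)) (fun he => hne ?_)
    exact nak hp hcard (lpow A (n + 1)) ((lpow_add_two n).symm.trans he)
  have hcard_top : Nat.card (lpow A 1) = p ^ 4 := by
    rw [lpow_one, Nat.card_congr AddSubgroup.topEquiv.toEquiv, hcard]
  have hstep : ∀ {W : AddSubgroup A} {k : ℕ}, p ^ k < Nat.card W → p ^ (k + 1) ≤ Nat.card W := by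
    intro W k h
    obtain ⟨j, hj⟩ := card_ppow hp W
    rw [hj] at h ⊢
    exact Nat.pow_le_pow_right hp.pos ((Nat.pow_lt_pow_iff_right hp.one_lt).1 h)
  have hbotcard : ∀ {W : AddSubgroup A}, W ≠ ⊥ → p ^ 1 ≤ Nat.card W := by
    intro W h
    refine hstep ?_
    rw [pow_zero]
    refine lt_of_le_of_ne (Nat.one_le_iff_ne_zero.2 (Nat.card_pos (α := W)).ne') ?_
    exact fun h1 => h ((AddSubgroup.card_eq_one).1 h1.symm)
  -- A⁵ = 0
  have hL5 : lpow A 5 = ⊥ := by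
    by_contra h5
    have h4 : lpow A 4 ≠ ⊥ := fun h => h5 (le_bot_iff.1 (h ▸ lpow_succ_le 4))
    have h3 : lpow A 3 ≠ ⊥ := fun h => h4 (le_bot_iff.1 (h ▸ lpow_succ_le 3))
    have h2 : lpow A 2 ≠ ⊥ := fun h => h3 (le_bot_iff.1 (h ▸ lpow_succ_le 2))
    have h1 : lpow A 1 ≠ ⊥ := fun h => h2 (le_bot_iff.1 (h ▸ lpow_succ_le 1))
    have c5 := hbotcard h5
    have c4 : p ^ 2 ≤ Nat.card (lpow A 4) :=
      hstep (lt_of_le_of_lt c5 (card_lt_of_lt (hstrict 3 h4)))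
    have c3 : p ^ 3 ≤ Nat.card (lpow A 3) :=
      hstep (lt_of_le_of_lt c4 (card_lt_of_lt (hstrict 2 h3)))
    have c2 : p ^ 4 ≤ Nat.card (lpow A 2) :=
      hstep (lt_of_le_of_lt c3 (card_lt_of_lt (hstrict 1 h2)))
    have clt : Nat.card (lpow A 2) < p ^ 4 := by
      rw [← hcard_top]
      exact card_lt_of_lt (hstrict 0 h1)
    omega
  have hmem_bot : ∀ {x : A}, x ∈ lpow A 5 → x = 0 := fun hx => by
    rwa [hL5, AddSubgroup.mem_bot] at hx
  by_cases h4 : lpow A 4 = ⊥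
  · -- easy case : A⁴ = 0
    have h := hshift 2 Q hQ2
    rwa [h4, AddSubgroup.mem_bot] at h
  · -- A⁴ ≠ 0 : the chain has orders p⁴ > p³ > p² > p > 1
    have h3 : lpow A 3 ≠ ⊥ := fun h => h4 (le_bot_iff.1 (h ▸ lpow_succ_le 3))
    have h2 : lpow A 2 ≠ ⊥ := fun h => h3 (le_bot_iff.1 (h ▸ lpow_succ_le 2))
    have h1 : lpow A 1 ≠ ⊥ := fun h => h2 (le_bot_iff.1 (h ▸ lpow_succ_le 1))
    have c4 := hbotcard h4
    have c3 : p ^ 2 ≤ Nat.card (lpow A 3) :=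
      hstep (lt_of_le_of_lt c4 (card_lt_of_lt (hstrict 2 h3)))
    have c2 : p ^ 3 ≤ Nat.card (lpow A 2) :=
      hstep (lt_of_le_of_lt c3 (card_lt_of_lt (hstrict 1 h2)))
    have c2' : Nat.card (lpow A 2) < p ^ 4 := by
      rw [← hcard_top]
      exact card_lt_of_lt (hstrict 0 h1)
    have hc2 : Nat.card (lpow A 2) = p ^ 3 := by
      obtain ⟨j, hj⟩ := card_ppow hp (lpow A 2)
      rw [hj] at c2 c2' ⊢
      have e1 := (Nat.pow_lt_pow_iff_right hp.one_lt).1 c2'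
      have e2 := (Nat.pow_le_pow_iff_right hp.one_lt).1 c2
      have : j = 3 := by omega
      rw [this]
    by_cases hNS : star R S ∈ lpow A 3
    · -- then Q ∈ A³ and star Q Q ∈ A⁵ = 0
      have hQ3 : Q ∈ lpow A 3 := by
        have he : Q = (Q - star R S) + star R S := by abel
        rw [he]
        exact add_mem hzmem hNS
      exact hmem_bot (hshift 3 Q hQ3)
    · -- main case
      set NS := star R S with hNSdef
      have hNS2 : NS ∈ lpow A 2 := star_mem_two R S
      set D := lpow A 3 ⊔ AddSubgroup.zmultiples NS with hDdef
      have hD_le : D ≤ lpow A 2 := by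
        refine sup_le (lpow_succ_le 2) ?_
        intro x hx
        obtain ⟨k, rfl⟩ := (AddSubgroup.mem_zmultiples_iff).1 hx
        exact zsmul_mem hNS2 k
      have hD_lt : lpow A 3 < D :=
        lt_of_le_of_ne le_sup_left
          (fun he => hNS (by rw [he]; exact SetLike.le_def.1 le_sup_right (AddSubgroup.mem_zmultiples NS)))
      have hcD : Nat.card D = p ^ 3 := by
        obtain ⟨j, hj⟩ := card_ppow hp D
        have hgt : p ^ 2 < Nat.card D := lt_of_le_of_lt c3 (card_lt_of_lt hD_lt)
        have hle : Nat.card D ≤ p ^ 3 := hc2 ▸ St8.card_le_of_le hD_le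
        rw [hj] at hgt hle ⊢
        have e1 := (Nat.pow_lt_pow_iff_right hp.one_lt).1 hgt
        have e2 := (Nat.pow_le_pow_iff_right hp.one_lt).1 hle
        have : j = 3 := by omega
        rw [this]
      have hD_eq : D = lpow A 2 := eq_of_le_of_card_le hD_le (by rw [hcD, hc2])
      -- star R (star R S) ∈ A⁴
      have hNN4 : star R NS ∈ lpow A 4 := by
        have hsplit : star R NS = star R Q - star R (Q - NS) := by
          rw [← St8.star_sub]
          congr 1
          abel
        rw [hsplit]
        refine sub_mem ?_ (star_mem_succ R hzmem)
        rw [← hstarQR]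
        exact hshift 2 R hR
      -- star R maps A² into A⁴
      have hNL2 : ∀ x ∈ lpow A 2, star R x ∈ lpow A 4 := by
        intro x hx
        rw [← hD_eq] at hx
        obtain ⟨y, hy, z, hz, rfl⟩ := (AddSubgroup.mem_sup).1 hx
        obtain ⟨k, rfl⟩ := (AddSubgroup.mem_zmultiples_iff).1 hz
        rw [St8.star_add, St8.star_zsmul]
        exact add_mem (star_mem_succ R hy) (zsmul_mem hNN4 k)
      set v := star R (star S NS) with hvdef
      have hv4 : v ∈ lpow A 4 := star_mem_succ R (star_mem_succ S hNS2)
      -- route 1 : star Q NS = v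
      have hroute2 : star Q NS = v := by
        rw [hstarComm NS]
        have hz1 : star S (star R NS) = 0 := hmem_bot (star_mem_succ S hNN4)
        rw [hz1, sub_zero, ← hvdef]
        rw [lam_eq S⁻¹, hmem_bot (star_mem_succ S⁻¹ hv4), zero_add]
        rw [lam_eq R⁻¹, hmem_bot (star_mem_succ R⁻¹ hv4), zero_add]
      -- star Q and star R commute
      have hlamcomm : ∀ x : A, lam Q (lam R x) = lam R (lam Q x) := fun x => by
        rw [← lam_mul, ← lam_mul, hQRc]
      have hMNcomm : star Q NS = star R (star Q S) := by
        have hgen : ∀ x : A, star Q (star R x) = star R (star Q x) := fun x => by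
          simp only [St8.star_def, lam_sub]
          rw [hlamcomm x]
          abel
        exact hgen S
      -- route 2 : star R (star Q S) = -v
      set u := star R (star S S) - star S NS with hudef
      have hu3 : u ∈ lpow A 3 :=
        sub_mem (star_mem_succ R (star_mem_two S S)) (star_mem_succ S hNS2)
      have hQS : star Q S = u + (star S⁻¹ u + star R⁻¹ (star S⁻¹ u + u)) := by
        rw [hstarComm S, ← hNSdef, ← hudef]
        rw [lam_eq S⁻¹, lam_eq R⁻¹]
        abel
      have hw4 : star S⁻¹ u + star R⁻¹ (star S⁻¹ u + u) ∈ lpow A 4 :=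
        add_mem (star_mem_succ S⁻¹ hu3)
          (star_mem_succ R⁻¹ (add_mem (lpow_succ_le 3 (star_mem_succ S⁻¹ hu3)) hu3))
      have hroute1 : star R (star Q S) = -v := by
        rw [hQS, St8.star_add]
        rw [hmem_bot (star_mem_succ R hw4), add_zero]
        rw [hudef, St8.star_sub]
        rw [hmem_bot (star_mem_succ R (hNL2 _ (star_mem_two S S)))]
        rw [← hvdef, zero_sub]
      -- combine
      have hQQ : star Q Q = star Q NS := by
        have he : star Q Q = star Q NS + star Q (Q - NS) := by
          rw [← St8.star_add]
          congr 1
          abel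
        rw [he, hmem_bot (hshift 3 _ hzmem), add_zero]
      have hvv : v = -v := by
        conv_lhs => rw [← hroute2, hMNcomm]
        exact hroute1
      have h2ne : (2 : ZMod p) ≠ 0 := by
        have h2 : ((2 : ℕ) : ZMod p) ≠ 0 := by
          rw [Ne, ZMod.natCast_eq_zero_iff]
          exact fun hdvd => absurd (Nat.le_of_dvd (by norm_num) hdvd) (by omega)
        simpa using h2
      have hv0 : v = 0 := by
        have h2v : (2 : ZMod p) • v = 0 := by
          rw [two_smul]
          nth_rewrite 1 [hvv]
          exact neg_add_cancel v
        have := congrArg (fun t => (2 : ZMod p)⁻¹ • t) h2v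
        simpa [smul_smul, inv_mul_cancel₀ h2ne] using this
      rw [hQQ, hroute2, hv0]


/-- in a not right nilpotent `𝔽ₚ`-brace with multiplicative group XV,
`R ∈ A²` implies `Q * Q = 0`. -/
theorem statement8 (p : ℕ) (hp : p.Prime) (hp3 : 3 < p) (A : Type*) [FpBrace p A]
    (hnil : ¬ IsRightNilpotent A)
    (P Q R S : A) (hXV : IsXVBrace p A P Q R S) (hR : R ∈ lpow A 2) :
    LeftBrace.star Q Q = 0 := by
  obtain ⟨hcard, hclos, hrel⟩ := hXV
  exact statement8' p hp hp3 A P Q R S hcard hrel.2.1 hrel.2.2.2.2.2.1 hR
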